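/- Let K ⊆ ℂ be a subfield, let g ∈ ℂ(z) be a nonconstant rational function that can be written as a quotient of polynomials with coefficients in K, and let c ∈ ℂ be transcendental over K. Then there do not exist c₁ ∈ ℂ and polynomials r, s ∈ ℂ[z] with s ≠ 0 such that 1/(g + c) = c₁ · (r′s − rs′)/s² in ℂ(z); that is, 1/(g + c) cannot be written as a constant multiple of the derivative of a rational function. -/

import Mathlib

/-!
Write `g = p / q` with `p, q ∈ K[X]` coprime, so that `1 / (g + c) = q / P` for `P = p + c q`.
As `c` is transcendental over `K`, `P` is nonconstant, and each root `α` of `P` is transcendental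
over `K` (otherwise `c = -p(α) / q(α)` would be algebraic). So `q(α) ≠ 0`, and the nonzero
Wronskian `q p' - q' p = q P' - q' P ∈ K[X]` does not vanish at `α`, which makes `α` a simple root
of `P`: `q / P` has a simple pole at `α`. A derivative `(r' s - r s') / s²` has no simple poles,
since a pole of order `m` of `r / s` becomes a pole of order `m + 1`.
-/

open Polynomial

namespace Polynomial

section Wronskian

variable {R : Type*} [CommRing R]

theorem wronskian_mul_mul (e a b : R[X]) :
    wronskian (e * a) (e * b) = e ^ 2 * wronskian a b := by
  simp only [wronskian, derivative_mul]
  ring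

theorem wronskian_add_C_mul_self (a b : R[X]) (c : R) :
    wronskian a (b + C c * a) = wronskian a b := by
  simp only [wronskian, derivative_add, derivative_mul, derivative_C, zero_mul, zero_add]
  ring

theorem C_mul_wronskian (c : R) (a b : R[X]) : C c * wronskian a b = wronskian a (C c * b) := by
  simp only [wronskian, derivative_mul, derivative_C, zero_mul, zero_add]
  ring

theorem map_wronskian {S : Type*} [CommRing S] (f : R →+* S) (a b : R[X]) :
    (wronskian a b).map f = wronskian (a.map f) (b.map f) := by
  simp only [wronskian, Polynomial.map_sub, Polynomial.map_mul, derivative_map]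

end Wronskian

section Multiplicity

variable {F : Type*} [Field F] [CharZero F]

theorem rootMultiplicity_wronskian_of_isCoprime {s r : F[X]} {α : F} (hcop : IsCoprime s r)
    (hs : s ≠ 0) (hα : s.IsRoot α) :
    rootMultiplicity α (wronskian s r) = rootMultiplicity α s - 1 := by
  set m := rootMultiplicity α s
  have hm : 0 < m := (rootMultiplicity_pos hs).2 hα
  have hrα : ¬ r.IsRoot α := fun hr => by
    obtain ⟨a, b, hab⟩ := hcop
    simpa [hα.eq_zero, hr.eq_zero] using congrArg (eval α) hab
  have hr0 : r ≠ 0 := by rintro rfl; exact hrα (by simp)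
  have hs' : derivative s ≠ 0 := fun h => by
    obtain ⟨a, rfl⟩ := natDegree_eq_zero.1 (derivative_eq_zero.1 h)
    exact hs (by simpa using hα)
  have hs'r : rootMultiplicity α (derivative s * r) = m - 1 := by
    rw [rootMultiplicity_mul (mul_ne_zero hs' hr0),
      derivative_rootMultiplicity_of_root hα, rootMultiplicity_eq_zero hrα, add_zero]
  -- `(X - α)^m` divides `s r'` but not `s' r`, hence not the Wronskian
  have hndvd : ¬ (X - C α) ^ m ∣ wronskian s r := fun h => by
    have : (X - C α) ^ m ∣ derivative s * r := by
      have := dvd_sub (dvd_mul_of_dvd_left (pow_rootMultiplicity_dvd s α) (derivative r)) h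
      rwa [wronskian, sub_sub_cancel] at this
    have := (le_rootMultiplicity_iff (mul_ne_zero hs' hr0)).2 this
    omega
  have hW : wronskian s r ≠ 0 := fun h => hndvd (h ▸ dvd_zero _)
  refine le_antisymm ((rootMultiplicity_le_iff hW α _).2 (by rwa [Nat.sub_add_cancel hm])) ?_
  refine (le_rootMultiplicity_iff hW).2 (dvd_sub ?_ ?_)
  · exact dvd_mul_of_dvd_left
      ((pow_dvd_pow _ (Nat.sub_le m 1)).trans (pow_rootMultiplicity_dvd s α)) _
  · exact dvd_mul_of_dvd_left
      (derivative_rootMultiplicity_of_root hα ▸ pow_rootMultiplicity_dvd _ α) _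

theorem rootMultiplicity_wronskian_add_one_ne {s : F[X]} (hs : s ≠ 0) (r : F[X]) (α : F) :
    rootMultiplicity α (wronskian s r) + 1 ≠ 2 * rootMultiplicity α s := by
  obtain ⟨r₂, s₂, e, hcop, rfl, rfl⟩ := UniqueFactorizationMonoid.exists_reduced_factors' r s hs
  have he : e ≠ 0 := left_ne_zero_of_mul hs
  have hs₂ : s₂ ≠ 0 := right_ne_zero_of_mul hs
  rw [wronskian_mul_mul, rootMultiplicity_mul hs]
  by_cases hW : wronskian s₂ r₂ = 0
  · rw [hW, mul_zero, rootMultiplicity_zero]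
    omega
  rw [rootMultiplicity_mul (mul_ne_zero (pow_ne_zero 2 he) hW), sq,
    rootMultiplicity_mul (mul_ne_zero he he)]
  by_cases hα : s₂.IsRoot α
  · rw [rootMultiplicity_wronskian_of_isCoprime (isRelPrime_iff_isCoprime.1 hcop).symm hs₂ hα]
    have := (rootMultiplicity_pos hs₂).2 hα
    omega
  · rw [rootMultiplicity_eq_zero hα]
    omega

theorem algebraMap_div_ne_wronskian_div_sq {q P s : F[X]} {α : F} (hq : ¬ q.IsRoot α)
    (hP : rootMultiplicity α P = 1) (hs : s ≠ 0) (r : F[X]) :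
    algebraMap F[X] (RatFunc F) q / algebraMap F[X] (RatFunc F) P ≠
      algebraMap F[X] (RatFunc F) (wronskian s r) / algebraMap F[X] (RatFunc F) (s ^ 2) := by
  intro h
  have hP0 : P ≠ 0 := by rintro rfl; simp at hP
  have hq0 : q ≠ 0 := by rintro rfl; exact hq (by simp)
  rw [div_eq_div_iff (RatFunc.algebraMap_ne_zero hP0)
    (RatFunc.algebraMap_ne_zero (pow_ne_zero 2 hs)), ← map_mul, ← map_mul] at h
  have hpoly := RatFunc.algebraMap_injective F h
  have hlhs : q * s ^ 2 ≠ 0 := mul_ne_zero hq0 (pow_ne_zero 2 hs)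
  have hmult := congrArg (rootMultiplicity α) hpoly
  rw [rootMultiplicity_mul hlhs, rootMultiplicity_mul (hpoly ▸ hlhs), rootMultiplicity_eq_zero hq,
    hP, sq, rootMultiplicity_mul (mul_ne_zero hs hs)] at hmult
  exact rootMultiplicity_wronskian_add_one_ne hs r α (by omega)

end Multiplicity

end Polynomial

section Transcendental

variable {K L : Type*} [Field K] [Field L] [Algebra K L] {c : L}

theorem Transcendental.algebraMap_add_mul_algebraMap_ne_zero (hc : Transcendental K c) {a b : K}
    (hab : a ≠ 0 ∨ b ≠ 0) : algebraMap K L a + c * algebraMap K L b ≠ 0 := by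
  intro h
  rcases eq_or_ne b 0 with rfl | hb
  · simp_all
  · refine hc ?_
    have hcab : c = algebraMap K L (-a / b) := by
      rw [map_div₀, map_neg, eq_div_iff (by simpa using hb)]
      linear_combination h
    exact hcab ▸ isAlgebraic_algebraMap _

theorem Transcendental.degree_map_add_C_mul_map_pos (hc : Transcendental K c) {p q : K[X]}
    (hpq : ¬ (p.natDegree = 0 ∧ q.natDegree = 0)) :
    0 < (p.map (algebraMap K L) + C c * q.map (algebraMap K L)).degree := by
  obtain ⟨n, hn, hpqn⟩ : ∃ n, n ≠ 0 ∧ (p.coeff n ≠ 0 ∨ q.coeff n ≠ 0) := by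
    by_contra! h
    refine hpq ⟨?_, ?_⟩ <;> refine Nat.le_zero.1 (natDegree_le_iff_coeff_eq_zero.2 fun N hN => ?_)
    exacts [(h N hN.ne').1, (h N hN.ne').2]
  have hcoeff := hc.algebraMap_add_mul_algebraMap_ne_zero (L := L) hpqn
  rw [← coeff_map, ← coeff_map, ← coeff_C_mul, ← coeff_add] at hcoeff
  exact (WithBot.coe_pos.2 (Nat.pos_of_ne_zero hn)).trans_le (le_degree_of_ne_zero hcoeff)

theorem Transcendental.of_aeval_add_mul_aeval_eq_zero (hc : Transcendental K c) {p q : K[X]}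
    {α : L} (hq : Polynomial.aeval α q ≠ 0)
    (hα : Polynomial.aeval α p + c * Polynomial.aeval α q = 0) : Transcendental K α := by
  intro hαalg
  have hint (f : K[X]) : IsIntegral K (Polynomial.aeval α f) :=
    isAlgebraic_iff_isIntegral.1 (not_not.1 fun h => (transcendental_aeval_iff.1 h).1 hαalg)
  have hcα : c = -Polynomial.aeval α p * (Polynomial.aeval α q)⁻¹ := by
    field_simp
    linear_combination hα
  exact hc (isAlgebraic_iff_isIntegral.2 (hcα ▸ (hint p).neg.mul (hint q).inv))

theorem Transcendental.exists_rootMultiplicity_map_add_C_mul_map_eq_one [CharZero K]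
    [IsAlgClosed L] (hc : Transcendental K c) {p q : K[X]} (hcop : IsCoprime p q)
    (hpq : ¬ (p.natDegree = 0 ∧ q.natDegree = 0)) :
    ∃ α, ¬ (q.map (algebraMap K L)).IsRoot α ∧
      rootMultiplicity α (p.map (algebraMap K L) + C c * q.map (algebraMap K L)) = 1 := by
  set P := p.map (algebraMap K L) + C c * q.map (algebraMap K L) with hPdef
  have hPdeg := hc.degree_map_add_C_mul_map_pos hpq
  have hP0 : P ≠ 0 := ne_zero_of_degree_gt hPdeg
  obtain ⟨α, hα⟩ := IsAlgClosed.exists_root P hPdeg.ne'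
  have hPα : Polynomial.aeval α p + c * Polynomial.aeval α q = 0 := by
    simpa [P, eval_map_algebraMap] using hα
  have hqα : Polynomial.aeval α q ≠ 0 := fun hq => by
    obtain ⟨a, b, hab⟩ := hcop
    have hp : Polynomial.aeval α p = 0 := by simpa [hq] using hPα
    simpa [hp, hq] using congrArg (Polynomial.aeval α) hab
  have hW : wronskian q p ≠ 0 := by
    rw [Ne, hcop.symm.wronskian_eq_zero_iff, derivative_eq_zero, derivative_eq_zero]
    tauto
  have hWα := mt (transcendental_iff.1 (hc.of_aeval_add_mul_aeval_eq_zero hqα hPα) _) hW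
  have hP' : ¬ (derivative P).IsRoot α := fun h => hWα <| by
    rw [← eval_map_algebraMap, map_wronskian, ← wronskian_add_C_mul_self _ _ c, ← hPdef,
      wronskian, eval_sub, eval_mul, eval_mul, h.eq_zero, hα.eq_zero, mul_zero, mul_zero, sub_zero]
  refine ⟨α, by simpa [eval_map_algebraMap] using hqα, le_antisymm ?_ ?_⟩
  · exact not_lt.1 fun h => hP' ((one_lt_rootMultiplicity_iff_isRoot hP0).1 h).2
  · exact (rootMultiplicity_pos hP0).2 hα

end Transcendental

theorem Subfield.exists_map_eq_of_coeff_mem {L : Type*} [Field L] (K : Subfield L) {p : L[X]}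
    (hp : ∀ i, p.coeff i ∈ K) : ∃ p' : K[X], p'.map (algebraMap K L) = p :=
  (mem_lifts p).1 ((lifts_iff_coeff_lifts p).2 fun n => ⟨⟨_, hp n⟩, rfl⟩)

theorem RatFunc.one_div_algebraMap_div_add_C {F : Type*} [Field F] (p : F[X]) {q : F[X]}
    (hq : q ≠ 0) (c : F) :
    1 / (algebraMap F[X] (RatFunc F) p / algebraMap F[X] (RatFunc F) q + RatFunc.C c) =
      algebraMap F[X] (RatFunc F) q / algebraMap F[X] (RatFunc F) (p + Polynomial.C c * q) := by
  have hq' := RatFunc.algebraMap_ne_zero hq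
  rw [← RatFunc.algebraMap_C, map_add, map_mul, div_add' _ _ _ hq', one_div_div, mul_comm]

/-- If `g ∈ ℂ(z)` is a nonconstant rational function defined over a
subfield `K ⊆ ℂ` and `c ∈ ℂ` is transcendental over `K`, then `1/(g + c)` is not a
constant multiple of the derivative of a rational function. -/
theorem generic_reciprocal_not_multiple_of_derivative
    (K : Subfield ℂ) (g : RatFunc ℂ)
    (hgnc : ¬ ∃ c : ℂ, g = RatFunc.C c)
    (hgK : ∃ p q : Polynomial ℂ, q ≠ 0 ∧ (∀ i, p.coeff i ∈ K) ∧ (∀ i, q.coeff i ∈ K) ∧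
      g = algebraMap (Polynomial ℂ) (RatFunc ℂ) p / algebraMap (Polynomial ℂ) (RatFunc ℂ) q)
    (c : ℂ) (hc : Transcendental K c) :
    ¬ ∃ (c₁ : ℂ) (r s : Polynomial ℂ), s ≠ 0 ∧
      1 / (g + RatFunc.C c) = RatFunc.C c₁ *
        (algebraMap (Polynomial ℂ) (RatFunc ℂ)
            (Polynomial.derivative r * s - r * Polynomial.derivative s) /
          algebraMap (Polynomial ℂ) (RatFunc ℂ) (s ^ 2)) := by
  rintro ⟨c₁, r, s, hs, heq⟩
  obtain ⟨p, q, hq, hpK, hqK, rfl⟩ := hgK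
  obtain ⟨p, rfl⟩ := K.exists_map_eq_of_coeff_mem hpK
  obtain ⟨q, rfl⟩ := K.exists_map_eq_of_coeff_mem hqK
  obtain ⟨p, q, d, hcop, rfl, rfl⟩ :=
    UniqueFactorizationMonoid.exists_reduced_factors' p q (by rintro rfl; simp at hq)
  rw [Polynomial.map_mul] at hq
  rw [Polynomial.map_mul, Polynomial.map_mul, map_mul, map_mul,
    mul_div_mul_left _ _ (RatFunc.algebraMap_ne_zero (left_ne_zero_of_mul hq))] at heq hgnc
  have hpq : ¬ (p.natDegree = 0 ∧ q.natDegree = 0) := by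
    rintro ⟨hp, hq⟩
    obtain ⟨a, rfl⟩ := natDegree_eq_zero.1 hp
    obtain ⟨b, rfl⟩ := natDegree_eq_zero.1 hq
    exact hgnc ⟨algebraMap K ℂ a / algebraMap K ℂ b, by simp [RatFunc.algebraMap_C]⟩
  obtain ⟨α, hqα, hPα⟩ :=
    hc.exists_rootMultiplicity_map_add_C_mul_map_eq_one (isRelPrime_iff_isCoprime.1 hcop) hpq
  refine algebraMap_div_ne_wronskian_div_sq hqα hPα hs (C c₁ * r) ?_
  rw [← RatFunc.one_div_algebraMap_div_add_C _ (right_ne_zero_of_mul hq), heq, ← C_mul_wronskian,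
    map_mul, RatFunc.algebraMap_C, mul_div_assoc, wronskian, mul_comm s, mul_comm _ r]
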